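/- Let d be a metric on ℕ, b₀ ∈ ℕ, and let M ∈ B(d,b₀) induce a bounded operator on ℓ² which is elliptic with constant C_ell > 0 (so that M is invertible with bounded inverse M⁻¹ on ℓ², and every finite section M[k] is invertible). Fix a block structure on ℕ. Then for every ε > 0 there exists a bandwidth b ∈ ℕ, depending only on b₀, C_ell, ‖M‖₂ and ε, together with matrices R ∈ B(d,b) and, for each k ∈ ℕ, R_k ∈ B(d,b) (identifying M[k]⁻¹ with its extension by zero to ℕ × ℕ) such that ‖M⁻¹ − R‖₂ + sup_{k∈ℕ} ‖M[k]⁻¹ − R_k‖₂ ≤ ε. If, in addition, M is block-banded with bandwidth b₀, then R and all R_k can be chosen block-banded with bandwidth b; if M is block-diagonal, then R and all R_k can be chosen block-diagonal. -/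

import Mathlib

/-!
An elliptic `T` with `‖T‖ ≤ L` satisfies `‖1 - t T‖ ≤ q := √(1 - c² / L²) < 1` for `t = c / L²`,
so `T⁻¹ = t ∑ (1 - t T)ⁿ` and truncating after `N` terms costs at most `t qᴺ / (1 - q)`.
The finite sections `M[k]` are elliptic with the same constant and have norm at most `‖M‖`,
so one `N` serves `M` and all `M[k]` at once.
The truncated series is a polynomial of degree `< N` in `T`, and bandwidths add under
multiplication by the triangle inequality, so it has bandwidth `N b₀`.
Block-bandedness and block-diagonality are bandedness for the pseudometric
`|block p - block q|`, with bandwidths `b₀` and `0`.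
-/

abbrev Mat := ℕ → ℕ → ℝ

noncomputable def mulVec (M : Mat) (x : ℕ → ℝ) : ℕ → ℝ := fun i => ∑' j, M i j * x j

def Memℓ2 (x : ℕ → ℝ) : Prop := Summable fun i => x i ^ 2

noncomputable def l2norm (x : ℕ → ℝ) : ℝ := Real.sqrt (∑' i, x i ^ 2)

def BoundedWith (M : Mat) (K : ℝ) : Prop :=
  ∀ x : ℕ → ℝ, Memℓ2 x →
    (∀ i, Summable fun j => |M i j * x j|) ∧ Memℓ2 (mulVec M x) ∧
      l2norm (mulVec M x) ≤ K * l2norm x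

def IsBoundedOp (M : Mat) : Prop := ∃ K : ℝ, 0 ≤ K ∧ BoundedWith M K

def Elliptic (M : Mat) (c : ℝ) : Prop :=
  ∀ x : ℕ → ℝ, Memℓ2 x → c * (∑' i, x i ^ 2) ≤ ∑' i, mulVec M x i * x i

def IsMetric (d : ℕ → ℕ → ℝ) : Prop :=
  (∀ i j, 0 ≤ d i j) ∧ (∀ i j, d i j = 0 ↔ i = j) ∧ (∀ i j, d i j = d j i) ∧
    ∀ i j k, d i k ≤ d i j + d j k

def Banded (d : ℕ → ℕ → ℝ) (b : ℝ) (M : Mat) : Prop := ∀ i j, b < d i j → M i j = 0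

/-- A block structure `0 = n₀ < n₁ < n₂ < ⋯`; block `i` consists of the indices
`n i ≤ p < n (i+1)`. -/
def IsBlockStructure (n : ℕ → ℕ) : Prop := StrictMono n ∧ n 0 = 0

def InBlock (n : ℕ → ℕ) (i p : ℕ) : Prop := n i ≤ p ∧ p < n (i + 1)

def BlockBanded (n : ℕ → ℕ) (b : ℕ) (M : Mat) : Prop :=
  ∀ i j p q, InBlock n i p → InBlock n j q → (b : ℤ) < |(i : ℤ) - (j : ℤ)| → M p q = 0

def BlockDiag (n : ℕ → ℕ) (M : Mat) : Prop :=
  ∀ i j p q, InBlock n i p → InBlock n j q → i ≠ j → M p q = 0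

def matSub (A B : Mat) : Mat := fun p q => A p q - B p q

/-- `N` is a two-sided inverse of `M` as an operator on ℓ². -/
def IsInverseOn (M N : Mat) : Prop :=
  ∀ x : ℕ → ℝ, Memℓ2 x →
    Memℓ2 (mulVec M x) ∧ Memℓ2 (mulVec N x) ∧
      mulVec N (mulVec M x) = x ∧ mulVec M (mulVec N x) = x

def sect (M : Mat) (N : ℕ) : Matrix (Fin N) (Fin N) ℝ := Matrix.of fun i j => M i j

/-- Extension of a finite matrix by zero to an infinite matrix. -/
def extendZero (N : ℕ) (A : Matrix (Fin N) (Fin N) ℝ) : Mat :=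
  fun p q => if h : p < N ∧ q < N then A ⟨p, h.1⟩ ⟨q, h.2⟩ else 0

open Finset Ring Filter Topology
open Matrix (toEuclideanCLM)

noncomputable section

section Neumann

def neumannSum {R : Type*} [Ring R] [Algebra ℝ R] (t : ℝ) (x : R) (N : ℕ) : R :=
  t • ∑ n ∈ range N, (1 - t • x) ^ n

theorem map_neumannSum {R S F : Type*} [Ring R] [Ring S] [Algebra ℝ R] [Algebra ℝ S]
    [FunLike F R S] [AlgHomClass F ℝ R S] (f : F) (t : ℝ) (x : R) (N : ℕ) :
    f (neumannSum t x N) = neumannSum t (f x) N := by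
  simp [neumannSum, map_sum]

theorem map_ringInverse {R S F : Type*} [Semiring R] [Semiring S] [EquivLike F R S]
    [RingEquivClass F R S] (f : F) (x : R) : f x⁻¹ʳ = (f x)⁻¹ʳ := by
  by_cases hx : IsUnit x
  · obtain ⟨u, rfl⟩ := hx
    have hfu : f u = ((Units.map (f : R →* S) u : Sˣ) : S) := rfl
    rw [hfu, inverse_unit, inverse_unit, Units.coe_map_inv]
    rfl
  · rw [inverse_non_unit x hx, inverse_non_unit _ (by rwa [MulEquiv.isUnit_map]), map_zero]

theorem isUnit_and_ringInverse_eq_of_isUnit_smul {𝕜 R : Type*} [CommSemiring 𝕜] [Ring R]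
    [Algebra 𝕜 R] {t : 𝕜} {x : R} (h : IsUnit (t • x)) :
    IsUnit x ∧ x⁻¹ʳ = t • (t • x)⁻¹ʳ := by
  have hright : x * (t • (t • x)⁻¹ʳ) = 1 := by
    rw [mul_smul_comm, ← smul_mul_assoc, mul_inverse_cancel _ h]
  have hleft : (t • (t • x)⁻¹ʳ) * x = 1 := by
    rw [smul_mul_assoc, ← mul_smul_comm, inverse_mul_cancel _ h]
  let u : Rˣ := ⟨x, _, hright, hleft⟩
  exact ⟨u.isUnit, inverse_unit u⟩

theorem norm_inverse_one_sub_sub_sum_pow_le {R : Type*} [NormedRing R] [CompleteSpace R]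
    (hone : ‖(1 : R)‖ ≤ 1) {x : R} {q : ℝ} (hx : ‖x‖ ≤ q) (hq : q < 1) (N : ℕ) :
    ‖(1 - x)⁻¹ʳ - ∑ n ∈ range N, x ^ n‖ ≤ q ^ N / (1 - q) := by
  have hq0 : 0 ≤ q := (norm_nonneg x).trans hx
  have hpow : ∀ n, ‖x ^ n‖ ≤ q ^ n := by
    intro n
    induction n with
    | zero => simpa using hone
    | succ n ih =>
      rw [pow_succ, pow_succ]
      exact (norm_mul_le _ _).trans (mul_le_mul ih hx (norm_nonneg _) (pow_nonneg hq0 n))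
  have htail : (1 - x)⁻¹ʳ - ∑ n ∈ range N, x ^ n = ∑' n, x ^ (n + N) := by
    rw [← geom_series_eq_inverse x (hx.trans_lt hq),
      ← (summable_geometric_of_norm_lt_one (hx.trans_lt hq)).sum_add_tsum_nat_add N,
      add_sub_cancel_left]
  have hgeom : HasSum (fun n => q ^ (n + N)) (q ^ N / (1 - q)) := by
    simpa [pow_add, div_eq_mul_inv, mul_comm] using
      (hasSum_geometric_of_lt_one hq0 hq).mul_left (q ^ N)
  rw [htail]
  exact tsum_of_norm_bounded hgeom fun n => hpow (n + N)

def neumannRate (c L : ℝ) : ℝ := √(1 - c ^ 2 / L ^ 2)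

theorem neumannRate_lt_one {c L : ℝ} (hc : c ≠ 0) (hL : L ≠ 0) : neumannRate c L < 1 :=
  (Real.sqrt_lt' one_pos).2 (by rw [one_pow]; linarith [show 0 < c ^ 2 / L ^ 2 by positivity])

variable {E : Type*} [NormedAddCommGroup E] [InnerProductSpace ℝ E]

theorem norm_one_sub_smul_le_of_elliptic (T : E →L[ℝ] E) {c L : ℝ} (hc : 0 ≤ c) (hL : 0 < L)
    (hTL : ‖T‖ ≤ L) (hell : ∀ x, c * ‖x‖ ^ 2 ≤ inner ℝ (T x) x) :
    ‖1 - (c / L ^ 2) • T‖ ≤ neumannRate c L := by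
  set t := c / L ^ 2 with ht_def
  have ht : 0 ≤ t := by positivity
  refine ContinuousLinearMap.opNorm_le_bound _ (Real.sqrt_nonneg _) fun x => ?_
  have hTx : ‖T x‖ ≤ L * ‖x‖ := T.le_of_opNorm_le hTL x
  -- `t = c / L²` minimises `1 - 2 t c + t² L²`, the factor given by expanding the square.
  have hsq : ‖x - t • T x‖ ^ 2 ≤ (1 - c ^ 2 / L ^ 2) * ‖x‖ ^ 2 := by
    rw [norm_sub_sq_real, inner_smul_right, norm_smul, real_inner_comm, Real.norm_of_nonneg ht]
    have h1 : c ^ 2 / L ^ 2 * ‖x‖ ^ 2 ≤ t * inner ℝ (T x) x :=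
      calc c ^ 2 / L ^ 2 * ‖x‖ ^ 2 = t * (c * ‖x‖ ^ 2) := by rw [ht_def]; ring
        _ ≤ t * inner ℝ (T x) x := mul_le_mul_of_nonneg_left (hell x) ht
    have h2 : (t * ‖T x‖) ^ 2 ≤ c ^ 2 / L ^ 2 * ‖x‖ ^ 2 :=
      calc (t * ‖T x‖) ^ 2 ≤ (t * (L * ‖x‖)) ^ 2 := by gcongr
        _ = c ^ 2 / L ^ 2 * ‖x‖ ^ 2 := by rw [ht_def]; field_simp
    linarith
  calc ‖(1 - t • T) x‖ = √(‖x - t • T x‖ ^ 2) := by simp [Real.sqrt_sq (norm_nonneg _)]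
    _ ≤ √((1 - c ^ 2 / L ^ 2) * ‖x‖ ^ 2) := Real.sqrt_le_sqrt hsq
    _ = neumannRate c L * ‖x‖ := by
      rw [neumannRate, Real.sqrt_mul' _ (sq_nonneg _), Real.sqrt_sq (norm_nonneg _)]

def neumannBound (c L : ℝ) (N : ℕ) : ℝ :=
  c / L ^ 2 * (neumannRate c L ^ N / (1 - neumannRate c L))

theorem neumannBound_nonneg {c L : ℝ} (hc : 0 < c) (hL : L ≠ 0) (N : ℕ) :
    0 ≤ neumannBound c L N := by
  have hq := neumannRate_lt_one hc.ne' hL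
  exact mul_nonneg (by positivity)
    (div_nonneg (pow_nonneg (Real.sqrt_nonneg _) N) (sub_nonneg.2 hq.le))

theorem exists_neumannBound_le {c L ε : ℝ} (hc : c ≠ 0) (hL : L ≠ 0) (hε : 0 < ε) :
    ∃ N, neumannBound c L N ≤ ε := by
  have hlim : Tendsto (neumannBound c L) atTop (𝓝 0) := by
    have h := ((tendsto_pow_atTop_nhds_zero_of_lt_one (Real.sqrt_nonneg _)
      (neumannRate_lt_one hc hL)).div_const (1 - neumannRate c L)).const_mul (c / L ^ 2)
    rwa [zero_div, mul_zero] at h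
  exact (hlim.eventually (ge_mem_nhds hε)).exists

theorem isUnit_and_norm_inverse_sub_neumannSum_le [CompleteSpace E] (T : E →L[ℝ] E) {c L : ℝ}
    (hc : 0 < c) (hL : 0 < L) (hTL : ‖T‖ ≤ L) (hell : ∀ x, c * ‖x‖ ^ 2 ≤ inner ℝ (T x) x)
    (N : ℕ) :
    IsUnit T ∧ ‖T⁻¹ʳ - neumannSum (c / L ^ 2) T N‖ ≤
      neumannBound c L N := by
  set t := c / L ^ 2
  have hq := neumannRate_lt_one hc.ne' hL.ne'
  have hU := norm_one_sub_smul_le_of_elliptic T hc.le hL hTL hell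
  have hunit : IsUnit (1 - (1 - t • T)) := isUnit_one_sub_of_norm_lt_one (hU.trans_lt hq)
  rw [sub_sub_cancel] at hunit
  obtain ⟨hT, hinv⟩ := isUnit_and_ringInverse_eq_of_isUnit_smul hunit
  refine ⟨hT, ?_⟩
  have herr := norm_inverse_one_sub_sub_sum_pow_le ContinuousLinearMap.norm_id_le hU hq N
  rw [sub_sub_cancel] at herr
  rw [hinv, neumannSum, ← smul_sub, norm_smul, Real.norm_of_nonneg (by positivity)]
  exact mul_le_mul_of_nonneg_left herr (by positivity)

end Neumann

section Bandedness

variable {ρ : ℕ → ℕ → ℝ}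

def matMul (A B : Mat) : Mat := fun p q => ∑' k, A p k * B k q

theorem matSub_eq_sub (A B : Mat) : matSub A B = A - B := rfl

variable (ρ) in
def bandedSubmodule (b : ℝ) : Submodule ℝ Mat where
  carrier := {A | Banded ρ b A}
  zero_mem' _ _ _ := rfl
  add_mem' hA hB p q h := by simp [hA p q h, hB p q h]
  smul_mem' c _ hA p q h := by simp [hA p q h]

theorem bandedSubmodule_mono : Monotone (bandedSubmodule ρ) :=
  fun _ _ hab _ hA p q h => hA p q (hab.trans_lt h)

theorem banded_zero_of_offDiag_eq_zero (hself : ∀ p, ρ p p = 0) {A : Mat}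
    (hA : ∀ p q, p ≠ q → A p q = 0) : Banded ρ 0 A :=
  fun p q h => hA p q fun hpq => by subst hpq; simp [hself] at h

theorem Banded.matMul (htri : ∀ p q r, ρ p r ≤ ρ p q + ρ q r) {a b : ℝ} {A B : Mat}
    (hA : Banded ρ a A) (hB : Banded ρ b B) : Banded ρ (a + b) (matMul A B) := by
  intro p r h
  refine (tsum_congr fun q => ?_).trans tsum_zero
  rcases lt_or_ge a (ρ p q) with hpq | hpq
  · rw [hA p q hpq, zero_mul]
  · rw [hB q r (by linarith [htri p q r]), mul_zero]

/-- `Φ 1` need not be the identity: for `extendZero` it is a truncated one. -/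
theorem banded_map_neumannSum {R : Type*} [Ring R] [Algebra ℝ R]
    (hself : ∀ p, ρ p p = 0) (htri : ∀ p q r, ρ p r ≤ ρ p q + ρ q r) (Φ : R →ₗ[ℝ] Mat)
    (hΦone : ∀ p q, p ≠ q → Φ 1 p q = 0) (hΦmul : ∀ x y, Φ (x * y) = matMul (Φ x) (Φ y))
    {β : ℝ} (hβ : 0 ≤ β) {x : R} (hx : Banded ρ β (Φ x)) (t : ℝ) (N : ℕ) :
    Banded ρ (N * β) (Φ (neumannSum t x N)) := by
  let S : ℝ → Submodule ℝ R := fun b => (bandedSubmodule ρ b).comap Φ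
  have hone : (1 : R) ∈ S 0 := banded_zero_of_offDiag_eq_zero hself hΦone
  have hstep : 1 - t • x ∈ S β := sub_mem (bandedSubmodule_mono hβ hone) (Submodule.smul_mem _ t hx)
  have hpow : ∀ n : ℕ, (1 - t • x) ^ n ∈ S (n * β) := by
    intro n
    induction n with
    | zero => simpa using hone
    | succ n ih =>
      rw [pow_succ, Submodule.mem_comap, hΦmul, Nat.cast_succ, add_one_mul]
      exact ih.matMul htri hstep
  show t • ∑ n ∈ range N, (1 - t • x) ^ n ∈ S (N * β)
  refine Submodule.smul_mem _ t (sum_mem fun n hn => ?_)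
  refine bandedSubmodule_mono ?_ (hpow n)
  gcongr
  exact_mod_cast (mem_range.1 hn).le

end Bandedness

section Ell2

abbrev ℓ2 := lp (fun _ : ℕ => ℝ) 2

theorem norm_rpow_two_toReal (a : ℝ) : ‖a‖ ^ (2 : ENNReal).toReal = a ^ 2 := by
  norm_num [sq_abs]

theorem memℓ2_iff_memℓp {x : ℕ → ℝ} : Memℓ2 x ↔ Memℓp x 2 := by
  rw [memℓp_gen_iff (by norm_num), Memℓ2]
  simp only [norm_rpow_two_toReal]

def Memℓ2.toLp {x : ℕ → ℝ} (hx : Memℓ2 x) : ℓ2 := ⟨x, memℓ2_iff_memℓp.1 hx⟩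

@[simp] theorem Memℓ2.coe_toLp {x : ℕ → ℝ} (hx : Memℓ2 x) : ⇑hx.toLp = x := rfl

theorem memℓ2_coe (f : ℓ2) : Memℓ2 f := memℓ2_iff_memℓp.2 f.2

theorem tsum_sq_eq_norm_sq (f : ℓ2) : ∑' i, f i ^ 2 = ‖f‖ ^ 2 := by
  simpa [norm_rpow_two_toReal] using
    (lp.norm_rpow_eq_tsum (by norm_num : (0 : ℝ) < (2 : ENNReal).toReal) f).symm

theorem l2norm_coe (f : ℓ2) : l2norm f = ‖f‖ := by
  rw [l2norm, tsum_sq_eq_norm_sq, Real.sqrt_sq (norm_nonneg f)]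

theorem inner_eq_tsum_mul (f g : ℓ2) : inner ℝ f g = ∑' i, f i * g i := by
  rw [lp.inner_eq_tsum]
  exact tsum_congr fun i => by simp [mul_comm]

theorem apply_eq_inner_single (f : ℓ2) (i : ℕ) : f i = inner ℝ (lp.single 2 i (1 : ℝ)) f := by
  simp [lp.inner_single_left]

theorem summable_abs_mul (f g : ℓ2) : Summable fun j => |f j * g j| := by
  refine Summable.of_nonneg_of_le (fun j => abs_nonneg _) (fun j => ?_)
    ((memℓ2_coe f).add (memℓ2_coe g))
  rw [abs_mul]
  nlinarith [sq_abs (f j), sq_abs (g j), sq_nonneg (|f j| - |g j|)]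

def matOf : (ℓ2 →L[ℝ] ℓ2) →ₗ[ℝ] Mat where
  toFun T i j := T (lp.single 2 j 1) i
  map_add' _ _ := rfl
  map_smul' _ _ := rfl

theorem matOf_apply (T : ℓ2 →L[ℝ] ℓ2) (i j : ℕ) : matOf T i j = T (lp.single 2 j 1) i := rfl

theorem matOf_apply_eq_adjoint (T : ℓ2 →L[ℝ] ℓ2) (i j : ℕ) :
    matOf T i j = T.adjoint (lp.single 2 i 1) j := by
  rw [matOf_apply, apply_eq_inner_single, ← ContinuousLinearMap.adjoint_inner_left,
    apply_eq_inner_single _ j, real_inner_comm]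

theorem summable_abs_matOf_mul (T : ℓ2 →L[ℝ] ℓ2) (f : ℓ2) (i : ℕ) :
    Summable fun j => |matOf T i j * f j| := by
  simpa only [matOf_apply_eq_adjoint] using summable_abs_mul (T.adjoint (lp.single 2 i 1)) f

theorem mulVec_matOf (T : ℓ2 →L[ℝ] ℓ2) (f : ℓ2) : mulVec (matOf T) f = T f := by
  funext i
  simp only [mulVec, matOf_apply_eq_adjoint]
  rw [← inner_eq_tsum_mul, ContinuousLinearMap.adjoint_inner_left, ← apply_eq_inner_single]

theorem boundedWith_matOf {T : ℓ2 →L[ℝ] ℓ2} {K : ℝ} (hT : ‖T‖ ≤ K) : BoundedWith (matOf T) K := by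
  intro x hx
  rw [← hx.coe_toLp, mulVec_matOf, l2norm_coe, l2norm_coe]
  exact ⟨summable_abs_matOf_mul T _, memℓ2_coe _, T.le_of_opNorm_le hT _⟩

theorem matOf_mul (T S : ℓ2 →L[ℝ] ℓ2) : matOf (T * S) = matMul (matOf T) (matOf S) := by
  funext i j
  change T (S (lp.single 2 j 1)) i = _
  rw [← mulVec_matOf T]
  rfl

theorem matOf_one_of_ne {i j : ℕ} (h : i ≠ j) : matOf 1 i j = 0 :=
  lp.single_apply_ne 2 j _ h

theorem isInverseOn_matOf_inverse {T : ℓ2 →L[ℝ] ℓ2} (hT : IsUnit T) :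
    IsInverseOn (matOf T) (matOf T⁻¹ʳ) := by
  intro x hx
  rw [← hx.coe_toLp, mulVec_matOf, mulVec_matOf, mulVec_matOf, mulVec_matOf]
  refine ⟨memℓ2_coe _, memℓ2_coe _, ?_, ?_⟩
  · rw [← mul_apply_eq_comp, inverse_mul_cancel _ hT, one_apply_eq_self]
  · rw [← mul_apply_eq_comp, mul_inverse_cancel _ hT, one_apply_eq_self]

variable {M : Mat} {K : ℝ}

def opOf (hM : BoundedWith M K) : ℓ2 →L[ℝ] ℓ2 :=
  LinearMap.mkContinuous
    { toFun := fun f => (hM f (memℓ2_coe f)).2.1.toLp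
      map_add' := fun f g => by
        ext i
        simp only [Memℓ2.coe_toLp, lp.coeFn_add, Pi.add_apply, mulVec, mul_add]
        exact ((hM f (memℓ2_coe f)).1 i).of_abs.tsum_add ((hM g (memℓ2_coe g)).1 i).of_abs
      map_smul' := fun c f => by
        ext i
        simp only [Memℓ2.coe_toLp, lp.coeFn_smul, Pi.smul_apply, mulVec, smul_eq_mul,
          RingHom.id_apply, ← tsum_mul_left, mul_left_comm] }
    K fun f => by
      simpa only [LinearMap.coe_mk, AddHom.coe_mk, ← l2norm_coe, Memℓ2.coe_toLp] using
        (hM f (memℓ2_coe f)).2.2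

theorem coe_opOf (hM : BoundedWith M K) (f : ℓ2) : ⇑(opOf hM f) = mulVec M f := rfl

theorem norm_opOf_le (hM : BoundedWith M K) (hK : 0 ≤ K) : ‖opOf hM‖ ≤ K :=
  LinearMap.mkContinuous_norm_le _ hK _

theorem matOf_opOf (hM : BoundedWith M K) : matOf (opOf hM) = M := by
  funext i j
  rw [matOf_apply, coe_opOf, mulVec, tsum_eq_single j fun k hk => by
    rw [lp.single_apply_ne 2 j _ hk, mul_zero]]
  rw [lp.single_apply_self, mul_one]

theorem Elliptic.le_inner_opOf {c : ℝ} (hell : Elliptic M c) (hM : BoundedWith M K) (f : ℓ2) :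
    c * ‖f‖ ^ 2 ≤ inner ℝ (opOf hM f) f := by
  rw [inner_eq_tsum_mul, ← tsum_sq_eq_norm_sq]
  exact hell f (memℓ2_coe f)

end Ell2

section FiniteSection

variable {N : ℕ}

def extendZeroVec (N : ℕ) (y : EuclideanSpace ℝ (Fin N)) : ℕ → ℝ :=
  fun p => if h : p < N then y ⟨p, h⟩ else 0

def truncate (N : ℕ) (x : ℕ → ℝ) : EuclideanSpace ℝ (Fin N) :=
  WithLp.toLp 2 fun i : Fin N => x i

@[simp] theorem truncate_apply (x : ℕ → ℝ) (i : Fin N) : truncate N x i = x i := rfl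

@[simp] theorem extendZeroVec_apply_fin (y : EuclideanSpace ℝ (Fin N)) (i : Fin N) :
    extendZeroVec N y i = y i := by
  simp [extendZeroVec]

theorem extendZeroVec_of_le (y : EuclideanSpace ℝ (Fin N)) {p : ℕ} (hp : N ≤ p) :
    extendZeroVec N y p = 0 := by
  simp [extendZeroVec, hp.not_gt]

theorem tsum_eq_sum_fin {h : ℕ → ℝ} (h0 : ∀ p, N ≤ p → h p = 0) :
    ∑' p, h p = ∑ i : Fin N, h i := by
  rw [tsum_eq_sum (s := range N) fun p hp => h0 p (by simpa using hp),
    Fin.sum_univ_eq_sum_range]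

theorem memℓ2_extendZeroVec (y : EuclideanSpace ℝ (Fin N)) : Memℓ2 (extendZeroVec N y) :=
  summable_of_ne_finset_zero (s := range N) fun p hp => by
    rw [extendZeroVec_of_le y (by simpa using hp), sq, zero_mul]

theorem tsum_sq_extendZeroVec (y : EuclideanSpace ℝ (Fin N)) :
    ∑' p, extendZeroVec N y p ^ 2 = ‖y‖ ^ 2 := by
  rw [tsum_eq_sum_fin fun p hp => by rw [extendZeroVec_of_le y hp, sq, zero_mul],
    EuclideanSpace.norm_eq, Real.sq_sqrt (by positivity)]
  simp

theorem l2norm_extendZeroVec (y : EuclideanSpace ℝ (Fin N)) : l2norm (extendZeroVec N y) = ‖y‖ := by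
  rw [l2norm, tsum_sq_extendZeroVec, Real.sqrt_sq (norm_nonneg y)]

theorem norm_truncate_le {x : ℕ → ℝ} (hx : Memℓ2 x) : ‖truncate N x‖ ≤ l2norm x := by
  rw [EuclideanSpace.norm_eq, l2norm]
  refine Real.sqrt_le_sqrt ?_
  simp only [truncate_apply, Real.norm_eq_abs, sq_abs]
  rw [Fin.sum_univ_eq_sum_range (fun p => x p ^ 2)]
  exact hx.sum_le_tsum _ fun p _ => sq_nonneg _

theorem mulVec_extendZero (C : Matrix (Fin N) (Fin N) ℝ) (x : ℕ → ℝ) :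
    mulVec (extendZero N C) x = extendZeroVec N (toEuclideanCLM (𝕜 := ℝ) C (truncate N x)) := by
  funext p
  rw [mulVec, tsum_eq_sum_fin (N := N) fun q hq => by simp [extendZero, hq.not_gt]]
  by_cases hp : p < N
  · simp [extendZero, extendZeroVec, hp, Matrix.mulVec, dotProduct, Fin.is_lt]
  · simp [extendZero, extendZeroVec, hp]

theorem boundedWith_extendZero {C : Matrix (Fin N) (Fin N) ℝ} {s : ℝ}
    (hC : ‖toEuclideanCLM (𝕜 := ℝ) C‖ ≤ s) : BoundedWith (extendZero N C) s := by
  intro x hx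
  refine ⟨fun p => summable_of_ne_finset_zero (s := range N) fun q hq => ?_, ?_, ?_⟩
  · simp [extendZero, (show N ≤ q by simpa using hq).not_gt]
  · rw [mulVec_extendZero]
    exact memℓ2_extendZeroVec _
  · rw [mulVec_extendZero, l2norm_extendZeroVec]
    exact (ContinuousLinearMap.le_of_opNorm_le _ hC _).trans
      (mul_le_mul_of_nonneg_left (norm_truncate_le hx) ((norm_nonneg _).trans hC))

variable (N) in
def extendZeroₗ : Matrix (Fin N) (Fin N) ℝ →ₗ[ℝ] Mat where
  toFun := extendZero N
  map_add' C D := by funext p q; by_cases h : p < N ∧ q < N <;> simp [extendZero, h]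
  map_smul' c C := by funext p q; by_cases h : p < N ∧ q < N <;> simp [extendZero, h]

@[simp] theorem extendZeroₗ_apply (C : Matrix (Fin N) (Fin N) ℝ) :
    extendZeroₗ N C = extendZero N C :=
  rfl

theorem extendZero_mul (C D : Matrix (Fin N) (Fin N) ℝ) :
    extendZero N (C * D) = matMul (extendZero N C) (extendZero N D) := by
  funext p q
  rw [matMul, tsum_eq_sum_fin (N := N) fun k hk => by simp [extendZero, hk.not_gt]]
  by_cases h : p < N ∧ q < N
  · simp [extendZero, h, Matrix.mul_apply]
  · rw [extendZero, dif_neg h]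
    refine (sum_eq_zero fun k _ => ?_).symm
    rcases not_and_or.1 h with hp | hq <;> simp [extendZero, *]

theorem extendZero_one_of_ne {p q : ℕ} (h : p ≠ q) : extendZero N 1 p q = 0 := by
  unfold extendZero
  split_ifs with hpq
  · exact Matrix.one_apply_ne fun hi => h (congrArg Fin.val hi)
  · rfl

variable {M : Mat} {K c : ℝ}

theorem toEuclideanCLM_sect_apply (y : EuclideanSpace ℝ (Fin N)) :
    toEuclideanCLM (𝕜 := ℝ) (sect M N) y = truncate N (mulVec M (extendZeroVec N y)) := by
  ext i
  rw [truncate_apply, mulVec,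
    tsum_eq_sum_fin fun p hp => by rw [extendZeroVec_of_le y hp, mul_zero]]
  simp [sect, Matrix.mulVec, dotProduct]

theorem Elliptic.le_inner_sect (hell : Elliptic M c) (y : EuclideanSpace ℝ (Fin N)) :
    c * ‖y‖ ^ 2 ≤ inner ℝ (toEuclideanCLM (𝕜 := ℝ) (sect M N) y) y := by
  have h := hell _ (memℓ2_extendZeroVec y)
  rw [tsum_sq_extendZeroVec, tsum_eq_sum_fin fun p hp => by
    rw [extendZeroVec_of_le y hp, mul_zero]] at h
  simpa [toEuclideanCLM_sect_apply, PiLp.inner_apply, mul_comm] using h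

theorem norm_sect_le (hM : BoundedWith M K) (hK : 0 ≤ K) :
    ‖toEuclideanCLM (𝕜 := ℝ) (sect M N)‖ ≤ K := by
  refine ContinuousLinearMap.opNorm_le_bound _ hK fun y => ?_
  have hy := memℓ2_extendZeroVec y
  rw [toEuclideanCLM_sect_apply, ← l2norm_extendZeroVec y]
  exact (norm_truncate_le (hM _ hy).2.1).trans (hM _ hy).2.2

theorem Banded.extendZero_sect {ρ : ℕ → ℕ → ℝ} {β : ℝ} {M : Mat} (hM : Banded ρ β M) (m : ℕ) :
    Banded ρ β (extendZero m (sect M m)) := by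
  intro p q h
  unfold extendZero
  split_ifs
  · exact hM p q h
  · rfl

end FiniteSection

theorem banded_neumannSum_approximants {ρ : ℕ → ℕ → ℝ} (hself : ∀ p, ρ p p = 0)
    (htri : ∀ p q r, ρ p r ≤ ρ p q + ρ q r) {M : Mat} {K : ℝ} (hM : BoundedWith M K) {β : ℕ}
    (hMβ : Banded ρ β M) (t : ℝ) (N : ℕ) :
    Banded ρ ↑(N * β) (matOf (neumannSum t (opOf hM) N)) ∧
      ∀ m, Banded ρ ↑(N * β) (extendZero m (neumannSum t (sect M m) N)) := by
  rw [Nat.cast_mul]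
  exact ⟨banded_map_neumannSum hself htri matOf (fun _ _ => matOf_one_of_ne) matOf_mul
      β.cast_nonneg ((matOf_opOf hM).symm ▸ hMβ) t N,
    fun m => banded_map_neumannSum hself htri (extendZeroₗ m) (fun _ _ => extendZero_one_of_ne)
      extendZero_mul β.cast_nonneg (hMβ.extendZero_sect m) t N⟩

section Blocks

variable {n : ℕ → ℕ}

def blockIndex (n : ℕ → ℕ) (p : ℕ) : ℕ := Nat.findGreatest (fun i => n i ≤ p) p

theorem inBlock_blockIndex (hn : IsBlockStructure n) (p : ℕ) : InBlock n (blockIndex n p) p := by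
  have h0 : n 0 ≤ p := hn.2.symm ▸ Nat.zero_le p
  refine ⟨Nat.findGreatest_spec (P := fun i => n i ≤ p) (Nat.zero_le p) h0, ?_⟩
  by_contra! h
  exact Nat.findGreatest_is_greatest (Nat.lt_succ_self _) ((hn.1.id_le _).trans h) h

theorem blockIndex_eq (hn : IsBlockStructure n) {i p : ℕ} (h : InBlock n i p) :
    blockIndex n p = i := by
  have h' := inBlock_blockIndex hn p
  by_contra hne
  rcases lt_or_gt_of_ne hne with hlt | hlt
  · have := hn.1.monotone (show blockIndex n p + 1 ≤ i from hlt)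
    have := h'.2
    have := h.1
    omega
  · have := hn.1.monotone (show i + 1 ≤ blockIndex n p from hlt)
    have := h.2
    have := h'.1
    omega

def blockDist (n : ℕ → ℕ) (p q : ℕ) : ℝ := |(blockIndex n p : ℝ) - blockIndex n q|

theorem blockDist_self (p : ℕ) : blockDist n p p = 0 := by simp [blockDist]

theorem blockDist_triangle (p q r : ℕ) : blockDist n p r ≤ blockDist n p q + blockDist n q r :=
  abs_sub_le _ _ _

theorem blockBanded_iff (hn : IsBlockStructure n) {b : ℕ} {A : Mat} :
    BlockBanded n b A ↔ Banded (blockDist n) b A := by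
  constructor
  · intro h p q hpq
    exact h _ _ p q (inBlock_blockIndex hn p) (inBlock_blockIndex hn q) (by
      unfold blockDist at hpq
      exact_mod_cast hpq)
  · intro h i j p q hp hq hij
    refine h p q ?_
    rw [blockDist, blockIndex_eq hn hp, blockIndex_eq hn hq]
    exact_mod_cast hij

theorem blockDiag_iff_blockBanded_zero {A : Mat} : BlockDiag n A ↔ BlockBanded n 0 A := by
  refine forall₄_congr fun i j p q => imp_congr_right fun _ => imp_congr_right fun _ => ?_
  rw [Nat.cast_zero, abs_pos, sub_ne_zero, ne_eq, ne_eq, Nat.cast_inj]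

end Blocks

section EllipticApproximation

variable {M : Mat} {K L c : ℝ}

theorem Elliptic.isUnit_opOf_and_boundedWith_sub_neumannSum (hell : Elliptic M c) (hc : 0 < c)
    (hM : BoundedWith M K) (hK : 0 ≤ K) (hKL : K ≤ L) (hL : 0 < L) (N : ℕ) :
    IsUnit (opOf hM) ∧
      BoundedWith (matSub (matOf (opOf hM)⁻¹ʳ) (matOf (neumannSum (c / L ^ 2) (opOf hM) N)))
        (neumannBound c L N) := by
  obtain ⟨hunit, herr⟩ := isUnit_and_norm_inverse_sub_neumannSum_le _ hc hL
    ((norm_opOf_le hM hK).trans hKL) (hell.le_inner_opOf hM) N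
  refine ⟨hunit, ?_⟩
  rw [matSub_eq_sub, ← map_sub]
  exact boundedWith_matOf herr

theorem Elliptic.isUnit_sect_and_boundedWith_sub_neumannSum (hell : Elliptic M c) (hc : 0 < c)
    (hM : BoundedWith M K) (hK : 0 ≤ K) (hKL : K ≤ L) (hL : 0 < L) (m N : ℕ) :
    IsUnit (sect M m) ∧
      BoundedWith (matSub (extendZero m (sect M m)⁻¹)
        (extendZero m (neumannSum (c / L ^ 2) (sect M m) N))) (neumannBound c L N) := by
  obtain ⟨hunit, herr⟩ := isUnit_and_norm_inverse_sub_neumannSum_le _ hc hL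
    ((norm_sect_le hM hK).trans hKL) hell.le_inner_sect N
  refine ⟨(MulEquiv.isUnit_map _).1 hunit, ?_⟩
  rw [matSub_eq_sub, ← extendZeroₗ_apply, ← extendZeroₗ_apply, ← map_sub, extendZeroₗ_apply]
  refine boundedWith_extendZero ?_
  rwa [map_sub, Matrix.nonsing_inv_eq_ringInverse, map_ringInverse, map_neumannSum]

end EllipticApproximation

end

/-- banded approximation of the inverse of a banded, bounded, elliptic
matrix and of the inverses of all its finite sections `M[k]` (blocks `0,…,k`),
with bandedness inherited w.r.t. the metric, and inheritance of block-bandedness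
and block-diagonality. -/
theorem banded_approximation_of_inverse
    (d : ℕ → ℕ → ℝ) (hd : IsMetric d) (b₀ : ℕ) (M : Mat)
    (hband : Banded d (b₀ : ℝ) M) (hbdd : IsBoundedOp M)
    (Cell : ℝ) (hCell : 0 < Cell) (hell : Elliptic M Cell)
    (nseq : ℕ → ℕ) (hn : IsBlockStructure nseq) :
    ∃ Minv : Mat, IsBoundedOp Minv ∧ IsInverseOn M Minv ∧
      (∀ k : ℕ, IsUnit (sect M (nseq (k + 1)))) ∧
      ∀ ε : ℝ, 0 < ε → ∃ b : ℕ, ∃ R : Mat, ∃ Rk : ℕ → Mat,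
        Banded d (b : ℝ) R ∧ (∀ k, Banded d (b : ℝ) (Rk k)) ∧
        (∃ s t : ℝ, 0 ≤ s ∧ 0 ≤ t ∧ s + t ≤ ε ∧
          BoundedWith (matSub Minv R) s ∧
          ∀ k, BoundedWith
            (matSub (extendZero (nseq (k + 1)) (sect M (nseq (k + 1)))⁻¹) (Rk k)) t) ∧
        (BlockBanded nseq b₀ M →
          BlockBanded nseq b R ∧ ∀ k, BlockBanded nseq b (Rk k)) ∧
        (BlockDiag nseq M →
          BlockDiag nseq R ∧ ∀ k, BlockDiag nseq (Rk k)) := by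
  obtain ⟨K, hK, hM⟩ := hbdd
  obtain ⟨L, hKL, hL⟩ : ∃ L, K ≤ L ∧ 0 < L :=
    ⟨max K Cell, le_max_left _ _, hCell.trans_le (le_max_right _ _)⟩
  have hop := hell.isUnit_opOf_and_boundedWith_sub_neumannSum hCell hM hK hKL hL
  have hsect := hell.isUnit_sect_and_boundedWith_sub_neumannSum hCell hM hK hKL hL
  refine ⟨matOf (opOf hM)⁻¹ʳ, ⟨_, norm_nonneg _, boundedWith_matOf le_rfl⟩,
    by simpa only [matOf_opOf] using isInverseOn_matOf_inverse (hop 0).1,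
    fun k => (hsect _ 0).1, fun ε hε => ?_⟩
  obtain ⟨N, hN⟩ := exists_neumannBound_le hCell.ne' hL.ne' (half_pos hε)
  have hδ := neumannBound_nonneg hCell hL.ne' N
  have hd_banded := banded_neumannSum_approximants (fun p => (hd.2.1 p p).2 rfl) hd.2.2.2 hM
    hband (Cell / L ^ 2) N
  refine ⟨N * b₀, _, _, hd_banded.1, fun k => hd_banded.2 _,
    ⟨_, _, hδ, hδ, add_halves ε ▸ add_le_add hN hN, (hop N).2, fun k => (hsect _ N).2⟩,
    fun hBB => ?_, fun hBD => ?_⟩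
  · simp only [blockBanded_iff hn] at hBB ⊢
    have h := banded_neumannSum_approximants blockDist_self blockDist_triangle hM hBB
      (Cell / L ^ 2) N
    exact ⟨h.1, fun k => h.2 _⟩
  · simp only [blockDiag_iff_blockBanded_zero, blockBanded_iff hn] at hBD ⊢
    have h := banded_neumannSum_approximants blockDist_self blockDist_triangle hM hBD
      (Cell / L ^ 2) N
    exact ⟨h.1, fun k => h.2 _⟩
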